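/- For tree ordinals: Cr(t[x]) ≤ Cr(t) for every tree ordinal t and natural number x, where t[x] is the fundamental-sequence step and Cr is the ordinal correction function. -/

import Mathlib

/-- Tree ordinals as formal terms: `0`, and `ω^{t₁} + ⋯ + ω^{tₙ}` for tree
ordinals `t₁, …, tₙ` (no ordering condition on the exponents).
`oadd e r` denotes `r + ω^e`, i.e. `e` is the exponent of the **rightmost**
summand and `r` collects the summands to its left. -/
inductive T : Type where
  | zero : T
  | oadd : T → T → T
deriving DecidableEq

namespace T

/-- The induced ordinal `o(t)` of a tree term (ordinal arithmetic, so smaller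
summands may be absorbed). -/
noncomputable def o : T → Ordinal.{0}
  | zero => 0
  | oadd e r => o r + Ordinal.omega0 ^ o e

/-- The norm: `N0 = 0`, `N(ω^α + β) = 1 + Nα + Nβ`. -/
def norm : T → ℕ
  | zero => 0
  | oadd e r => 1 + norm e + norm r

/-- `rep e r x = r + ω^e · x`. -/
def rep (e r : T) : ℕ → T
  | 0 => r
  | x + 1 => oadd e (rep e r x)

/-- The standard fundamental sequences on tree terms:
`0[x] = 0`, `1[x] = 0`, `(t+1)[x] = t`, `(t + ω^{s+1})[x] = t + ω^s · x`,
`(t + ω^λ)[x] = t + ω^{λ[x]}` for a limit term `λ`. -/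
def fund : T → ℕ → T
  | zero, _ => zero
  | oadd zero r, _ => r
  | oadd (oadd zero e') r, x => rep e' r x
  | oadd (oadd (oadd a b) e') r, x => oadd (fund (oadd (oadd a b) e') x) r

/-- Auxiliary sum for the ordinal correction function: `crSum t m` adds
`N(ω^{tᵢ})` for each summand `ω^{tᵢ}` of `t` whose exponent is smaller (as an
ordinal) than some exponent strictly to its right (where `m` is the maximum of
the exponents lying to the right of all of `t`). -/
noncomputable def crSum : T → Ordinal.{0} → ℕ
  | zero, _ => 0
  | oadd e r, m => (if o e < m then 1 + norm e else 0) + crSum r (max m (o e))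

mutual
/-- The ordinal correction function `Cr`:
`Cr(0) = 0` and `Cr(t) = Σ {N(ω^{tᵢ}) : tᵢ < tⱼ for some j > i} + max Cr(tᵢ)`. -/
noncomputable def cr : T → ℕ
  | zero => 0
  | oadd e r => crSum (oadd e r) 0 + max (cr e) (crMax r)

/-- Maximum of `Cr` over the exponents of a term. -/
noncomputable def crMax : T → ℕ
  | zero => 0
  | oadd e r => max (cr e) (crMax r)
end

/-- Cantor normal form predicate: exponents are (weakly) increasing from the
rightmost summand leftwards, and all exponents are themselves in CNF.  Terms
satisfying `NF` faithfully represent the ordinals below `ε₀`. -/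
def NF : T → Prop
  | zero => True
  | oadd e r => NF e ∧ NF r ∧ (match r with | zero => True | oadd f _ => o e ≤ o f)

/-- A term is a limit iff its rightmost summand has nonzero exponent. -/
def IsLim : T → Prop
  | oadd (oadd _ _) _ => True
  | _ => False

/-- Drop rightmost summands with exponent of ordinal value `< b`
(the absorption performed by ordinal addition). -/
noncomputable def cleanup (b : Ordinal.{0}) : T → T
  | zero => zero
  | oadd f s => if o f < b then cleanup b s else oadd f s

/-- Normalization of a tree term to the Cantor normal form of its induced
ordinal: `toNF t` is `NF`, and `o (toNF t) = o t`. -/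
noncomputable def toNF : T → T
  | zero => zero
  | oadd e r => oadd (toNF e) (cleanup (o e) (toNF r))

/-- `repOne r x = r + x`. -/
def repOne (r : T) : ℕ → T
  | 0 => r
  | x + 1 => oadd zero (repOne r x)

/-- `repPair s r x = r + (ω^s + 1) · x`. -/
def repPair (s r : T) : ℕ → T
  | 0 => r
  | x + 1 => oadd zero (oadd s (repPair s r x))

/-- The worm-induced fundamental sequences `⟦·⟧` on tree terms:
`0⟦x⟧ = 0`, `(t+1)⟦x⟧ = t`, `(t+ω)⟦x⟧ = t + x`,
`(t + ω^{s+1})⟦x⟧ = t + (ω^s + 1) · x` for `s ≠ 0`, and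
`(t + ω^λ)⟦x⟧ = t + ω^{λ⟦x⟧}` for a limit term `λ`. -/
def fundW : T → ℕ → T
  | zero, _ => zero
  | oadd zero r, _ => r
  | oadd (oadd zero zero) r, x => repOne r x
  | oadd (oadd zero (oadd a b)) r, x => repPair (oadd a b) r x
  | oadd (oadd (oadd a b) e') r, x => oadd (fundW (oadd (oadd a b) e') x) r

end T

/-- Graph of the Hardy functions (with the standard fundamental sequences):
`H_0(x) = x`, `H_{t+1}(x) = H_t(x+1)`, `H_t(x) = H_{t[x]}(x)` for limit `t`.
`HG t x y` means `H_t(x)` is defined with value `y`. -/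
inductive HG : T → ℕ → ℕ → Prop where
  | zero (x) : HG T.zero x x
  | succ {r x y} : HG r (x + 1) y → HG (T.oadd T.zero r) x y
  | lim {e r x y} (he : e ≠ T.zero) :
      HG (T.fund (T.oadd e r) x) x y → HG (T.oadd e r) x y

/-!
`Cr(r + ω^e)` is monotone in the last exponent `e` with respect to both `o e` (which only raises the
threshold below which summands of `r` are counted) and `Cr e`. For a limit exponent,
`(r + ω^λ)[x] = r + ω^{λ[x]}` lowers both, by induction. For `(r + ω^{s+1})[x] = r + ω^s·x` the `x`
copies of `ω^s` are never counted (nothing to their right is larger), so the result has no more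
correction than `r + ω^s`, and `Cr(s+1) = Cr s`. Removing a trailing `1` does not change `Cr` at all.
-/

namespace T

@[simp] lemma o_zero : o zero = 0 := rfl

@[simp] lemma cr_zero : cr zero = 0 := by simp [cr]

lemma crSum_mono (t : T) : Monotone (crSum t) := by
  induction t with
  | zero => intro _ _ _; exact le_rfl
  | oadd e r _ ihr =>
    intro m m' h
    refine Nat.add_le_add ?_ (ihr (max_le_max_right _ h))
    by_cases hm : o e < m
    · rw [if_pos hm, if_pos (hm.trans_le h)]
    · rw [if_neg hm]
      exact Nat.zero_le _

lemma cr_eq_crSum_add_crMax (t : T) : cr t = crSum t 0 + crMax t := by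
  cases t <;> simp [cr, crMax, crSum]

lemma cr_oadd (e r : T) : cr (oadd e r) = crSum r (o e) + max (cr e) (crMax r) := by
  simp [cr, crSum]

lemma cr_oadd_zero (r : T) : cr (oadd zero r) = cr r := by
  simp [cr_oadd, cr_eq_crSum_add_crMax r]

lemma cr_oadd_le_cr_oadd {e e' : T} (r : T) (ho : o e ≤ o e') (hcr : cr e ≤ cr e') :
    cr (oadd e r) ≤ cr (oadd e' r) := by
  rw [cr_oadd, cr_oadd]
  exact Nat.add_le_add (crSum_mono r ho) (max_le_max hcr le_rfl)

lemma o_rep (e r : T) : ∀ x : ℕ, o (rep e r x) = o r + Ordinal.omega0 ^ o e * x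
  | 0 => by simp [rep]
  | x + 1 => by
    simp only [rep, o, o_rep e r x, Nat.cast_succ, mul_add, mul_one, add_assoc]

lemma crSum_rep_le (e r : T) :
    ∀ (x : ℕ) {m : Ordinal.{0}}, m ≤ o e → crSum (rep e r x) m ≤ crSum r (o e)
  | 0, _, h => crSum_mono r h
  | x + 1, _, h => by
    simp only [rep, crSum, if_neg (not_lt.2 h), max_eq_right h, zero_add]
    exact crSum_rep_le e r x le_rfl

lemma crMax_rep_le (e r : T) : ∀ x : ℕ, crMax (rep e r x) ≤ max (cr e) (crMax r)
  | 0 => le_max_right _ _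
  | x + 1 => max_le (le_max_left _ _) (crMax_rep_le e r x)

lemma cr_rep_le (e r : T) (x : ℕ) : cr (rep e r x) ≤ cr (oadd e r) := by
  rw [cr_eq_crSum_add_crMax, cr_oadd]
  exact Nat.add_le_add (crSum_rep_le e r x zero_le) (crMax_rep_le e r x)

lemma o_fund_le : ∀ (t : T) (x : ℕ), o (fund t x) ≤ o t
  | zero, _ => le_rfl
  | oadd zero r, _ => le_self_add
  | oadd (oadd zero s) r, x => by
    rw [fund, o_rep, o, o, o_zero, Ordinal.opow_zero, Ordinal.opow_add, Ordinal.opow_one]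
    gcongr
    exact (Ordinal.natCast_lt_omega0 x).le
  | oadd (oadd (oadd a b) s) r, x => by
    simp only [fund, o]
    gcongr
    · exact Ordinal.omega0_pos
    · exact o_fund_le (oadd (oadd a b) s) x

end T

/-- `Cr(t[x]) ≤ Cr(t)` for every tree ordinal `t` and every
natural number `x`. -/
theorem cr_fund_le (t : T) (x : ℕ) : T.cr (T.fund t x) ≤ T.cr t :=
  match t, x with
  | .zero, _ => le_rfl
  | .oadd .zero r, _ => (T.cr_oadd_zero r).ge
  | .oadd (.oadd .zero s) r, x =>
    calc T.cr (T.rep s r x) ≤ T.cr (.oadd s r) := T.cr_rep_le s r x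
      _ ≤ T.cr (.oadd (.oadd .zero s) r) :=
        T.cr_oadd_le_cr_oadd r le_self_add (T.cr_oadd_zero s).ge
  | .oadd (.oadd (.oadd a b) s) r, x =>
    T.cr_oadd_le_cr_oadd r (T.o_fund_le _ x) (cr_fund_le (.oadd (.oadd a b) s) x)
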